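/- Let F be a contravariant functor from subsets of the finite set I to polyhedra in ℝʳ (each value a finite intersection of closed half-spaces, possibly empty) whose evaluation subcomplexes C^F_•(m) are exact for every m ∈ ℝʳ, and let C ⊆ ℝʳ be the convex cone generated with nonnegative real coefficients by a finite set of vectors. Then the contravariant functor F^C defined by F^C(I') := F(I') + C (Minkowski sum) has exact evaluation subcomplexes C^{F^C}_•(m) for every m ∈ ℝʳ. -/

import Mathlib

open Pointwise

noncomputable section

variable {I : Type*} [Fintype I] [LinearOrder I]

/-- The basis vector `e_J` of the Koszul complex `⋀^• ℂ^I`, indexed by the subset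
`J = {i_0 < ⋯ < i_{p-1}} ⊆ I`.  The total space of the Koszul complex is modelled as
`Finset I → ℂ`, with `⋀^p ℂ^I` the span of the `e_J` with `J.card = p`. -/
def eVec (J : Finset I) : Finset I → ℂ := fun K => if K = J then 1 else 0

/-- The Koszul differential: `d (e_{I'}) = ∑_j (-1)^j e_{I' \ {i_j}}` for
`I' = {i_0 < ⋯ < i_p}`. -/
def koszulD : (Finset I → ℂ) →ₗ[ℂ] (Finset I → ℂ) where
  toFun f := fun J => ∑ i ∈ Jᶜ, (-1 : ℂ) ^ (J.filter (· < i)).card * f (insert i J)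
  map_add' f g := by
    funext J
    simp [mul_add, Finset.sum_add_distrib]
  map_smul' c f := by
    funext J
    simp only [Pi.smul_apply, smul_eq_mul, RingHom.id_apply, Finset.mul_sum]
    exact Finset.sum_congr rfl fun i _ => by ring

/-- The degree-`p` part of the evaluation subcomplex `C^F_•(m)`:
the span of the `e_{I'}` with `#I' = p` and `m ∈ F(I')`. -/
def evalC {α : Type*} (F : Finset I → Set α) (m : α) (p : ℕ) :
    Submodule ℂ (Finset I → ℂ) :=
  Submodule.span ℂ {v | ∃ J : Finset I, J.card = p ∧ m ∈ F J ∧ v = eVec J}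

/-- Exactness of the evaluation subcomplex `C^F_•(m)`: its homology vanishes in every
degree `p ≥ 0`. -/
def evalExact {α : Type*} (F : Finset I → Set α) (m : α) : Prop :=
  ∀ p : ℕ, ∀ x ∈ evalC F m p, koszulD x = 0 →
    ∃ y ∈ evalC F m (p + 1), koszulD y = x

/-- A polyhedron in `ℝʳ`: a finite intersection of closed half-spaces
`{x : ⟨x, v⟩ ≥ c}` (in particular `ℝʳ` and `∅` are polyhedra). -/
def IsPolyhedron {r : ℕ} (A : Set (Fin r → ℝ)) : Prop :=
  ∃ H : Finset ((Fin r → ℝ) × ℝ), A = {x | ∀ h ∈ H, h.2 ≤ ∑ k, x k * h.1 k}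

/-- The convex cone generated with nonnegative real coefficients by the finite set `G`
of vectors of `ℝʳ`. -/
def realCone {r : ℕ} (G : Finset (Fin r → ℝ)) : Set (Fin r → ℝ) :=
  {x | ∃ c : (Fin r → ℝ) → ℝ, (∀ g, 0 ≤ c g) ∧ x = ∑ g ∈ G, c g • g}

/-!
Adding the generators of the cone one at a time, it suffices to treat a single ray `ℝ≥0 g`.
Then `m ∈ F(J) + ℝ≥0 g` iff the set `T_J = {t ≥ 0 | m - t g ∈ F(J)}` is nonempty, so the complex
for `m` is spanned by the `e_J` with `J` in the union over `t ≥ 0` of the supports of the exact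
complexes `C^F_•(m - t g)`. Each `T_J` is a closed interval, so only finitely many endpoints
occur; sweeping `t` upwards through them, each new piece meets the union of the earlier ones in
the complex at an intermediate value of `t`, and Mayer–Vietoris keeps the union exact.
Fourier–Motzkin elimination shows that `F(J) + ℝ≥0 g` is again a polyhedron, so the induction on
generators goes through.
-/

section Chains

variable {ι : Type*}

def chains (S : Set (Finset ι)) (p : ℕ) : Submodule ℂ (Finset ι → ℂ) where
  carrier := {x | ∀ J, x J ≠ 0 → J.card = p ∧ J ∈ S}
  add_mem' {x y} hx hy J hJ := by
    by_cases hxJ : x J = 0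
    · exact hy J (by simpa [hxJ] using hJ)
    · exact hx J hxJ
  zero_mem' _ hJ := absurd rfl hJ
  smul_mem' _ _ hx J hJ := hx J (right_ne_zero_of_mul hJ)

lemma mem_chains {S : Set (Finset ι)} {p : ℕ} {x : Finset ι → ℂ} :
    x ∈ chains S p ↔ ∀ J, x J ≠ 0 → J.card = p ∧ J ∈ S :=
  Iff.rfl

lemma chains_mono {S T : Set (Finset ι)} (h : S ⊆ T) (p : ℕ) : chains S p ≤ chains T p :=
  fun _ hx J hJ => (hx J hJ).imp_right (@h J)

lemma chains_inter (S T : Set (Finset ι)) (p : ℕ) :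
    chains (S ∩ T) p = chains S p ⊓ chains T p := by
  ext x
  simp only [Submodule.mem_inf, mem_chains, Set.mem_inter_iff]
  exact ⟨fun h => ⟨fun J hJ => ⟨(h J hJ).1, (h J hJ).2.1⟩, fun J hJ => ⟨(h J hJ).1, (h J hJ).2.2⟩⟩,
    fun h J hJ => ⟨(h.1 J hJ).1, (h.1 J hJ).2, (h.2 J hJ).2⟩⟩

lemma chains_empty (p : ℕ) : chains (∅ : Set (Finset ι)) p = ⊥ :=
  eq_bot_iff.2 fun _ hx => funext fun J => by_contra fun hJ => (hx J hJ).2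

lemma indicator_mem_chains {S : Set (Finset ι)} {p : ℕ} {x : Finset ι → ℂ}
    (hx : x ∈ chains S p) (T : Set (Finset ι)) : T.indicator x ∈ chains (S ∩ T) p := by
  intro J hJ
  have hJT : J ∈ T := by
    by_contra h
    exact hJ (Set.indicator_of_notMem h x)
  rw [Set.indicator_of_mem hJT] at hJ
  exact ⟨(hx J hJ).1, (hx J hJ).2, hJT⟩

lemma sum_sum_erase_eq_zero_of_antisymm {M : Type*} [AddCommGroup M] [IsAddTorsionFree M]
    [DecidableEq ι] (s : Finset ι) (f : ι → ι → M)
    (hf : ∀ i ∈ s, ∀ j ∈ s, i ≠ j → f j i = -f i j) :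
    ∑ i ∈ s, ∑ j ∈ s.erase i, f i j = 0 := by
  refine self_eq_neg.1 ?_
  calc ∑ i ∈ s, ∑ j ∈ s.erase i, f i j = ∑ j ∈ s, ∑ i ∈ s.erase j, f i j :=
        Finset.sum_comm' fun i j => by simp only [Finset.mem_erase]; tauto
    _ = -∑ j ∈ s, ∑ i ∈ s.erase j, f j i := by
        simp only [← Finset.sum_neg_distrib]
        refine Finset.sum_congr rfl fun j hj => Finset.sum_congr rfl fun i hi => ?_
        exact hf j hj i (Finset.mem_of_mem_erase hi) (Finset.ne_of_mem_erase hi).symm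

end Chains

lemma koszulD_apply (x : Finset I → ℂ) (J : Finset I) :
    koszulD x J = ∑ i ∈ Jᶜ, (-1 : ℂ) ^ (J.filter (· < i)).card * x (insert i J) :=
  rfl

lemma koszulD_koszulD (x : Finset I → ℂ) : koszulD (koszulD x) = 0 := by
  funext J
  simp only [koszulD_apply, Finset.mul_sum, Finset.compl_insert, Pi.zero_apply]
  have key : ∀ a b, a ∉ J → a < b →
      (-1 : ℂ) ^ (J.filter (· < b)).card *
          ((-1) ^ ((insert b J).filter (· < a)).card * x (insert a (insert b J))) =
        -((-1 : ℂ) ^ (J.filter (· < a)).card *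
          ((-1) ^ ((insert a J).filter (· < b)).card * x (insert b (insert a J)))) := by
    intro a b haJ hab
    rw [Finset.filter_insert, if_neg hab.not_gt, Finset.filter_insert, if_pos hab,
      Finset.card_insert_of_notMem (fun h => haJ (Finset.mem_filter.1 h).1),
      Finset.insert_comm]
    ring
  refine sum_sum_erase_eq_zero_of_antisymm Jᶜ _ fun i hi j hj hij => ?_
  rcases hij.lt_or_gt with h | h
  · exact key i j (Finset.mem_compl.1 hi) h
  · exact neg_eq_iff_eq_neg.1 (key j i (Finset.mem_compl.1 hj) h).symm

lemma koszulD_mem_chains {S : Set (Finset I)} (hS : IsLowerSet S) {p : ℕ} {x : Finset I → ℂ}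
    (hx : x ∈ chains S (p + 1)) : koszulD x ∈ chains S p := by
  intro K hK
  obtain ⟨i, hi, hxi⟩ : ∃ i ∉ K, x (insert i K) ≠ 0 := by
    by_contra! h
    exact hK (Finset.sum_eq_zero fun i hi => by rw [h i (Finset.mem_compl.1 hi), mul_zero])
  obtain ⟨hcard, hmem⟩ := hx _ hxi
  rw [Finset.card_insert_of_notMem hi] at hcard
  exact ⟨Nat.succ_injective hcard, hS (Finset.subset_insert i K) hmem⟩

lemma koszulD_eq_zero_of_mem_chains_zero {S : Set (Finset I)} {x : Finset I → ℂ}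
    (hx : x ∈ chains S 0) : koszulD x = 0 := by
  funext K
  refine Finset.sum_eq_zero fun i _ => ?_
  have : x (insert i K) = 0 := by
    by_contra h
    exact (Finset.insert_nonempty i K).ne_empty (Finset.card_eq_zero.1 (hx _ h).1)
  rw [this, mul_zero]

lemma evalC_eq_chains {α : Type*} (F : Finset I → Set α) (m : α) (p : ℕ) :
    evalC F m p = chains {J | m ∈ F J} p := by
  refine le_antisymm (Submodule.span_le.2 ?_) fun x hx => ?_
  · rintro _ ⟨J, hcard, hmem, rfl⟩ K hK
    obtain rfl : K = J := by
      by_contra h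
      exact hK (if_neg h)
    exact ⟨hcard, hmem⟩
  · have hx_eq : x = ∑ J, x J • eVec J := by
      funext K
      simp [eVec]
    rw [hx_eq]
    refine Submodule.sum_mem _ fun J _ => ?_
    by_cases hJ : x J = 0
    · simp [hJ]
    · exact Submodule.smul_mem _ _ (Submodule.subset_span ⟨J, (hx J hJ).1, (hx J hJ).2, rfl⟩)

def KoszulExact (S : Set (Finset I)) : Prop :=
  ∀ p, ∀ x ∈ chains S p, koszulD x = 0 → ∃ y ∈ chains S (p + 1), koszulD y = x

lemma evalExact_iff_koszulExact {α : Type*} {F : Finset I → Set α} {m : α} :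
    evalExact F m ↔ KoszulExact {J | m ∈ F J} := by
  simp only [evalExact, KoszulExact, evalC_eq_chains]

lemma koszulExact_empty : KoszulExact (∅ : Set (Finset I)) := by
  intro p x hx _
  rw [chains_empty, Submodule.mem_bot] at hx
  exact ⟨0, zero_mem _, by rw [map_zero, hx]⟩

theorem KoszulExact.union {U V : Set (Finset I)} (hU : IsLowerSet U) (hV : IsLowerSet V)
    (hUe : KoszulExact U) (hVe : KoszulExact V) (hUVe : KoszulExact (U ∩ V)) :
    KoszulExact (U ∪ V) := by
  intro p x hx hdx
  set u := U.indicator x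
  set v := Uᶜ.indicator x
  have hxuv : u + v = x := U.indicator_self_add_compl x
  have hu : u ∈ chains U p := chains_mono Set.inter_subset_right p (indicator_mem_chains hx U)
  have hv : v ∈ chains V p :=
    chains_mono (fun J hJ => hJ.1.resolve_left hJ.2) p (indicator_mem_chains hx Uᶜ)
  have hduv : koszulD u = -koszulD v :=
    eq_neg_of_add_eq_zero_left (by rw [← map_add, hxuv, hdx])
  obtain ⟨w, hw, hdw⟩ : ∃ w ∈ chains (U ∩ V) p, koszulD w = koszulD u := by
    cases p with
    | zero => exact ⟨0, zero_mem _, by rw [map_zero, koszulD_eq_zero_of_mem_chains_zero hu]⟩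
    | succ q =>
      refine hUVe q _ ?_ (koszulD_koszulD u)
      rw [chains_inter]
      exact ⟨koszulD_mem_chains hU hu, hduv ▸ neg_mem (koszulD_mem_chains hV hv)⟩
  obtain ⟨a, ha, hda⟩ := hUe p (u - w) (sub_mem hu (chains_mono Set.inter_subset_left p hw))
    (by rw [map_sub, hdw, sub_self])
  obtain ⟨b, hb, hdb⟩ := hVe p (v + w) (add_mem hv (chains_mono Set.inter_subset_right p hw))
    (by rw [map_add, hdw, hduv, add_neg_cancel])
  refine ⟨a + b, add_mem (chains_mono Set.subset_union_left _ ha)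
    (chains_mono Set.subset_union_right _ hb), ?_⟩
  rw [map_add, hda, hdb, ← hxuv]
  abel

lemma Set.OrdConnected.exists_mem_and_mem_iff {T : Set ℝ} (hT : T.OrdConnected)
    (hTc : IsClosed T) (hTb : BddBelow T) {s : Finset ℝ} {a c : ℝ}
    (hinf : sInf T < a → sInf T ∈ s) (hsup : sSup T < a → sSup T ∈ s)
    (hs : ∀ t ∈ s, t < c) (hca : c < a) :
    (∃ t ∈ s, t ∈ T) ∧ a ∈ T ↔ c ∈ T := by
  constructor
  · rintro ⟨⟨t, hts, htT⟩, haT⟩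
    exact hT.out htT haT ⟨(hs t hts).le, hca.le⟩
  · intro hcT
    refine ⟨⟨sInf T, hinf ((csInf_le hTb hcT).trans_lt hca), hTc.csInf_mem ⟨c, hcT⟩ hTb⟩, ?_⟩
    obtain ⟨u, huT, hau⟩ : ∃ u ∈ T, a ≤ u := by
      by_cases hTa : BddAbove T
      · refine ⟨sSup T, hTc.csSup_mem ⟨c, hcT⟩ hTa, not_lt.1 fun hlt => ?_⟩
        exact (hs _ (hsup hlt)).not_ge (le_csSup hTa hcT)
      · obtain ⟨u, huT, hau⟩ := not_bddAbove_iff.1 hTa a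
        exact ⟨u, huT, hau.le⟩
    exact hT.out hcT huT ⟨hca.le, hau⟩

lemma koszulExact_biUnion_of_downwardClosed (Δ : ℝ → Set (Finset I))
    (hlower : ∀ t, IsLowerSet (Δ t)) (hexact : ∀ t, KoszulExact (Δ t))
    (hclosed : ∀ J, IsClosed {t | J ∈ Δ t}) (hconn : ∀ J, {t | J ∈ Δ t}.OrdConnected)
    (hbdd : ∀ J, BddBelow {t | J ∈ Δ t}) (E : Finset ℝ)
    (hinf : ∀ J, sInf {t | J ∈ Δ t} ∈ E) (hsup : ∀ J, sSup {t | J ∈ Δ t} ∈ E)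
    (s : Finset ℝ) (hs : ∀ x ∈ E, ∀ y ∈ s, x ≤ y → x ∈ s) : KoszulExact (⋃ t ∈ s, Δ t) := by
  classical
  induction s using Finset.induction_on_max with
  | empty => simpa using koszulExact_empty
  | insert a s hlt ih =>
    have hsE : ∀ x ∈ E, x < a → x ∈ s := fun x hx hxa =>
      (Finset.mem_insert.1 (hs x hx a (Finset.mem_insert_self a s) hxa.le)).resolve_left hxa.ne
    rw [Finset.set_biUnion_insert]
    rcases s.eq_empty_or_nonempty with rfl | hne
    · simpa using hexact a
    have hmax := hlt _ (s.max'_mem hne)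
    have hcs : ∀ t ∈ s, t < (s.max' hne + a) / 2 := fun t ht => by
      linarith [s.le_max' t ht]
    have hinter : Δ a ∩ ⋃ t ∈ s, Δ t = Δ ((s.max' hne + a) / 2) := by
      ext J
      simp only [Set.mem_inter_iff, Set.mem_iUnion, exists_prop]
      rw [and_comm]
      exact (hconn J).exists_mem_and_mem_iff (hclosed J) (hbdd J) (hsE _ (hinf J))
        (hsE _ (hsup J)) hcs (by linarith)
    refine KoszulExact.union (hlower a) (isLowerSet_iUnion₂ fun t _ => hlower t) (hexact a)
      (ih fun x hx y hy hxy => ?_) (hinter ▸ hexact _)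
    exact (Finset.mem_insert.1 (hs x hx y (Finset.mem_insert_of_mem hy) hxy)).resolve_left
      (hxy.trans_lt (hlt y hy)).ne

theorem koszulExact_iUnion (Δ : ℝ → Set (Finset I))
    (hlower : ∀ t, IsLowerSet (Δ t)) (hexact : ∀ t, KoszulExact (Δ t))
    (hclosed : ∀ J, IsClosed {t | J ∈ Δ t}) (hconn : ∀ J, {t | J ∈ Δ t}.OrdConnected)
    (hbdd : ∀ J, BddBelow {t | J ∈ Δ t}) : KoszulExact (⋃ t, Δ t) := by
  classical
  -- for `T_J` unbounded above, `sSup T_J` is a junk value; an extra point of `E` does no harm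
  set E : Finset ℝ := Finset.univ.image (fun J => sInf {t | J ∈ Δ t}) ∪
    Finset.univ.image (fun J => sSup {t | J ∈ Δ t})
  have hunion : ⋃ t, Δ t = ⋃ t ∈ E, Δ t := by
    refine subset_antisymm (Set.iUnion_subset fun t J hJ => ?_)
      (Set.iUnion₂_subset fun t _ => Set.subset_iUnion Δ t)
    exact Set.mem_biUnion (by simp [E]) ((hclosed J).csInf_mem ⟨t, hJ⟩ (hbdd J))
  rw [hunion]
  exact koszulExact_biUnion_of_downwardClosed Δ hlower hexact hclosed hconn hbdd E
    (by simp [E]) (by simp [E]) E fun x hx _ _ _ => hx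

section Cones

variable {r : ℕ}

lemma realCone_empty : realCone (∅ : Finset (Fin r → ℝ)) = 0 := by
  ext x
  simp only [realCone, Finset.sum_empty, Set.mem_ofPred_eq, Set.mem_zero]
  exact ⟨fun ⟨_, _, h⟩ => h, fun h => ⟨0, fun _ => le_rfl, h⟩⟩

lemma mem_add_realCone_singleton {A : Set (Fin r → ℝ)} {g m : Fin r → ℝ} :
    m ∈ A + realCone {g} ↔ ∃ t : ℝ, 0 ≤ t ∧ m - t • g ∈ A := by
  simp only [Set.mem_add, realCone, Finset.sum_singleton, Set.mem_ofPred_eq]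
  constructor
  · rintro ⟨a, ha, _, ⟨c, hc, rfl⟩, rfl⟩
    exact ⟨c g, hc g, by rwa [add_sub_cancel_right]⟩
  · rintro ⟨t, ht, hmem⟩
    exact ⟨_, hmem, t • g, ⟨fun _ => t, fun _ => ht, rfl⟩, sub_add_cancel m _⟩

lemma realCone_insert {g : Fin r → ℝ} {G : Finset (Fin r → ℝ)} (hg : g ∉ G) :
    realCone (insert g G) = realCone {g} + realCone G := by
  classical
  ext x
  rw [add_comm, mem_add_realCone_singleton]
  constructor
  · rintro ⟨c, hc, rfl⟩
    exact ⟨c g, hc g, c, hc, by rw [Finset.sum_insert hg, add_sub_cancel_left]⟩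
  · rintro ⟨t, ht, c, hc, hx⟩
    refine ⟨Function.update c g t, fun v => ?_, ?_⟩
    · rcases eq_or_ne v g with rfl | hv
      · simpa using ht
      · simpa [hv] using hc v
    · rw [Finset.sum_insert hg, Function.update_self,
        Finset.sum_congr rfl fun v hv => by rw [Function.update_of_ne (ne_of_mem_of_not_mem hv hg)],
        ← hx, add_sub_cancel]

end Cones

lemma evalExact_add_realCone_singleton {r : ℕ} (F : Finset I → Set (Fin r → ℝ))
    (hContra : ∀ A B : Finset I, A ⊆ B → F B ⊆ F A) (hClosed : ∀ J, IsClosed (F J))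
    (hConvex : ∀ J, Convex ℝ (F J)) (hExact : ∀ m, evalExact F m) (g m : Fin r → ℝ) :
    evalExact (fun J => F J + realCone {g}) m := by
  set Δ : ℝ → Set (Finset I) := fun t => {J | 0 ≤ t ∧ m - t • g ∈ F J}
  have hunion : {J | m ∈ F J + realCone {g}} = ⋃ t, Δ t := by
    ext J
    simp [Δ, mem_add_realCone_singleton]
  rw [evalExact_iff_koszulExact, hunion]
  refine koszulExact_iUnion Δ (fun t J K hKJ hJ => ⟨hJ.1, hContra K J hKJ hJ.2⟩) (fun t => ?_)
    (fun J => ?_) (fun J => ?_) (fun J => ⟨0, fun t ht => ht.1⟩)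
  · rcases lt_or_ge t 0 with ht | ht
    · have hΔ : Δ t = ∅ := Set.eq_empty_of_forall_notMem fun J hJ => ht.not_ge hJ.1
      exact hΔ ▸ koszulExact_empty
    · have hΔ : Δ t = {J | m - t • g ∈ F J} := by simp [Δ, ht]
      exact hΔ ▸ evalExact_iff_koszulExact.1 (hExact _)
  · exact isClosed_Ici.inter ((hClosed J).preimage (by fun_prop))
  · have hline : {t : ℝ | m - t • g ∈ F J} = AffineMap.lineMap m (m - g) ⁻¹' F J := by
      ext t
      simp [AffineMap.lineMap_apply, sub_eq_neg_add]
    have hconv : Convex ℝ {t : ℝ | m - t • g ∈ F J} := hline ▸ (hConvex J).affine_preimage _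
    exact ((convex_Ici 0).inter hconv).ordConnected

section Polyhedra

variable {r : ℕ} {A : Set (Fin r → ℝ)}

lemma isPolyhedron_iff :
    IsPolyhedron A ↔ ∃ H : Finset ((Fin r → ℝ) × ℝ), A = {x | ∀ h ∈ H, h.2 ≤ x ⬝ᵥ h.1} :=
  Iff.rfl

lemma IsPolyhedron.isClosed (hA : IsPolyhedron A) : IsClosed A := by
  obtain ⟨H, rfl⟩ := isPolyhedron_iff.1 hA
  simp only [Set.ofPred_forall]
  exact isClosed_biInter fun h _ => isClosed_le continuous_const (by fun_prop)

lemma IsPolyhedron.convex (hA : IsPolyhedron A) : Convex ℝ A := by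
  obtain ⟨H, rfl⟩ := isPolyhedron_iff.1 hA
  simp only [Set.ofPred_forall]
  exact convex_iInter₂ fun h _ => convex_halfSpace_ge
    ⟨fun x y => add_dotProduct x y h.1, fun c x => smul_dotProduct c x h.1⟩ h.2

lemma exists_nonneg_forall_mul_le_iff {ι : Type*} (s : Finset ι) (a b : ι → ℝ) :
    (∃ t, 0 ≤ t ∧ ∀ i ∈ s, t * a i ≤ b i) ↔
      (∀ i ∈ s, 0 ≤ a i → 0 ≤ b i) ∧
        ∀ i ∈ s, ∀ j ∈ s, 0 < a i → a j < 0 → 0 ≤ a i * b j - a j * b i := by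
  classical
  constructor
  · rintro ⟨t, ht, h⟩
    refine ⟨fun i hi hai => (mul_nonneg ht hai).trans (h i hi), fun i hi j hj hai haj => ?_⟩
    nlinarith [h i hi, h j hj]
  · rintro ⟨hnonneg, hpair⟩
    -- the least admissible `t`: the largest of `0` and the lower bounds `b j / a j`, `a j < 0`
    set L := insert 0 ((s.filter (a · < 0)).image fun j => b j / a j)
    set t := L.max' (Finset.insert_nonempty _ _)
    have hlow : ∀ j ∈ s, a j < 0 → b j / a j ≤ t := fun j hj haj =>
      L.le_max' _ (Finset.mem_insert_of_mem (Finset.mem_image_of_mem _ (by simp [hj, haj])))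
    refine ⟨t, L.le_max' 0 (Finset.mem_insert_self _ _), fun i hi => ?_⟩
    rcases lt_or_ge (a i) 0 with hai | hai
    · exact (div_le_iff_of_neg hai).1 (hlow i hi hai)
    rcases hai.eq_or_lt with hai | hai
    · simpa [← hai] using hnonneg i hi hai.le
    obtain ht | ⟨j, ⟨hj, haj⟩, hjt⟩ : t = 0 ∨ ∃ j, (j ∈ s ∧ a j < 0) ∧ b j / a j = t := by
      simpa [L] using L.max'_mem (Finset.insert_nonempty _ _)
    · simpa [ht] using hnonneg i hi hai.le
    · rw [← hjt, div_mul_eq_mul_div, div_le_iff_of_neg haj]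
      linarith [hpair i hi j hj hai haj]

lemma IsPolyhedron.add_realCone_singleton (hA : IsPolyhedron A) (g : Fin r → ℝ) :
    IsPolyhedron (A + realCone {g}) := by
  classical
  obtain ⟨H, rfl⟩ := isPolyhedron_iff.1 hA
  set a : (Fin r → ℝ) × ℝ → ℝ := fun h => g ⬝ᵥ h.1
  refine isPolyhedron_iff.2 ⟨H.filter (0 ≤ a ·) ∪
    Finset.image₂ (fun i j => a i • j - a j • i) (H.filter (0 < a ·)) (H.filter (a · < 0)), ?_⟩
  ext x
  have hslice : ∀ t : ℝ, x - t • g ∈ {x | ∀ h ∈ H, h.2 ≤ x ⬝ᵥ h.1} ↔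
      ∀ h ∈ H, t * a h ≤ x ⬝ᵥ h.1 - h.2 := fun t => by
    simp only [Set.mem_ofPred_eq, sub_dotProduct, smul_dotProduct, smul_eq_mul]
    exact forall₂_congr fun h _ => by constructor <;> intro <;> linarith
  simp only [mem_add_realCone_singleton, hslice, exists_nonneg_forall_mul_le_iff,
    Set.mem_ofPred_eq, Finset.forall_mem_union, Finset.forall_mem_image₂, Finset.mem_filter,
    and_imp, Prod.snd_sub, Prod.fst_sub, Prod.smul_fst, Prod.smul_snd, dotProduct_sub,
    dotProduct_smul, smul_eq_mul, sub_nonneg]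
  refine and_congr Iff.rfl (forall₂_congr fun i hi => ?_)
  exact ⟨fun h hai j hj haj => by linarith [h j hj hai haj],
    fun h j hj hai haj => by linarith [h hai j hj haj]⟩

end Polyhedra

/-- Proposition 7 of the paper.
Let `F` be a contravariant functor from subsets of the finite set `I` to polyhedra in
`ℝʳ` whose evaluation subcomplexes `C^F_•(m)` are exact for every `m ∈ ℝʳ`, and let
`C ⊆ ℝʳ` be the convex cone generated with nonnegative real coefficients by a finite set
`G` of vectors.  Then the functor `F^C(I') := F(I') + C` (Minkowski sum) has exact
evaluation subcomplexes `C^{F^C}_•(m)` for every `m ∈ ℝʳ`. -/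
theorem evalExact_add_cone {r : ℕ} (F : Finset I → Set (Fin r → ℝ))
    (hContra : ∀ A B : Finset I, A ⊆ B → F B ⊆ F A)
    (hPoly : ∀ J : Finset I, IsPolyhedron (F J))
    (hExact : ∀ m : Fin r → ℝ, evalExact F m)
    (G : Finset (Fin r → ℝ)) :
    ∀ m : Fin r → ℝ, evalExact (fun J => F J + realCone G) m := by
  classical
  induction G using Finset.induction_on generalizing F with
  | empty => simpa only [realCone_empty, add_zero] using hExact
  | insert g G hg ih =>
    simp_rw [realCone_insert hg, ← add_assoc]
    exact ih _ (fun A B hAB => Set.add_subset_add_right (hContra A B hAB))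
      (fun J => (hPoly J).add_realCone_singleton g)
      (evalExact_add_realCone_singleton F hContra (fun J => (hPoly J).isClosed)
        (fun J => (hPoly J).convex) hExact g)

end
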